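/- Let r ≥ 1 and let F₁, …, F_r : ℂ → ℂˣ satisfy F_j(s) = F_{j−1}(s)·F_j(s+1) for all s ∈ ℂ and 2 ≤ j ≤ r, and F₁(s+1) = −F₁(s) for all s ∈ ℂ. Let g ∈ ℤ[x,x⁻¹] and set f(x) = (1 − x⁻¹)^r · g(x). Then for all s ∈ ℂ, (T_f F_r)(s) = (−1)^{g(1)}, where g(1) ∈ ℤ is the sum of the coefficients of g. In particular (T_f F_r)(s) ∈ {1, −1} is constant. -/

import Mathlib

open LaurentPolynomial
open scoped LaurentPolynomial

/-- The coefficient of `x^k` in a Laurent polynomial `f = ∑ₖ a(k) xᵏ ∈ ℤ[x,x⁻¹]`. -/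
noncomputable def coeffZ (f : ℤ[T;T⁻¹]) (k : ℤ) : ℤ := f.coeff k

/-- The twisted function `(T_f F)(s) = ∏ₖ F(s−k)^{a(k)}` where `a` is the coefficient function
of the Laurent polynomial `f`. -/
noncomputable def Tw (f : ℤ[T;T⁻¹]) (F : ℂ → ℂˣ) (s : ℂ) : ℂˣ :=
  ∏ᶠ k : ℤ, F (s - (k : ℂ)) ^ coeffZ f k

/-- The value `g(1) = ∑ₖ a(k)` of a Laurent polynomial `g = ∑ₖ a(k) xᵏ` at `x = 1`,
i.e. the sum of its coefficients. -/
noncomputable def evalOne (g : ℤ[T;T⁻¹]) : ℤ := ∑ᶠ k : ℤ, coeffZ g k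

/-!
Multiplying `f` by `1 − x⁻¹` turns `T_f F` into `T_f G` whenever `F(s) = G(s)·F(s+1)`, since
`x⁻¹` acts on `T_f` as the shift `s ↦ s + 1`. Peeling off the `r` factors of `(1 − x⁻¹)^r`
therefore walks down the ladder `F_r, F_{r−1}, …, F_1`, and the last step, from `F_1`, lands
on the constant function `−1`, whose twist by `g` is `(−1)^{g(1)}`.
-/

lemma mulSupport_zpow_subset_support {ι G : Type*} [DivInvMonoid G] (u : ι → G) (a : ι → ℤ) :
    Function.mulSupport (fun i => u i ^ a i) ⊆ Function.support a :=
  Function.mulSupport_subset_iff'.2 fun i hi => by rw [Function.notMem_support.1 hi, zpow_zero]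

lemma finprod_zpow_eq_zpow_finsum {ι G : Type*} [CommGroup G] (c : G) {a : ι → ℤ}
    (ha : Function.HasFiniteSupport a) : ∏ᶠ i, c ^ a i = c ^ ∑ᶠ i, a i := by
  rw [finsum_eq_sum a ha, finprod_eq_prod_of_mulSupport_subset _ (s := ha.toFinset)
    (ha.coe_toFinset.symm ▸ mulSupport_zpow_subset_support (fun _ => c) a)]
  induction ha.toFinset using Finset.cons_induction with
  | empty => simp
  | cons i t hi ih => rw [Finset.prod_cons, Finset.sum_cons, ih, zpow_add]

lemma hasFiniteMulSupport_zpow_coeffZ {G : Type*} [DivInvMonoid G] (f : ℤ[T;T⁻¹]) (u : ℤ → G) :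
    Function.HasFiniteMulSupport fun k => u k ^ coeffZ f k :=
  f.coeff.hasFiniteSupport.subset (mulSupport_zpow_subset_support u (coeffZ f))

lemma coeffZ_sub (f₁ f₂ : ℤ[T;T⁻¹]) (k : ℤ) :
    coeffZ (f₁ - f₂) k = coeffZ f₁ k - coeffZ f₂ k := by
  simp [coeffZ]

lemma coeffZ_T_mul (n : ℤ) (f : ℤ[T;T⁻¹]) (k : ℤ) : coeffZ (T n * f) k = coeffZ f (k - n) := by
  rw [coeffZ, T, AddMonoidAlgebra.coeff_single_mul_apply, one_mul, neg_add_eq_sub, coeffZ]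

lemma Tw_T_mul (n : ℤ) (f : ℤ[T;T⁻¹]) (F : ℂ → ℂˣ) (s : ℂ) :
    Tw (T n * f) F s = Tw f F (s - n) := by
  simp only [Tw, coeffZ_T_mul]
  rw [← finprod_comp_equiv (Equiv.addRight n)]
  refine finprod_congr fun k => ?_
  simp only [Equiv.coe_addRight, add_sub_cancel_right, Int.cast_add, sub_add_eq_sub_sub_swap]

lemma Tw_sub (f₁ f₂ : ℤ[T;T⁻¹]) (F : ℂ → ℂˣ) (s : ℂ) :
    Tw (f₁ - f₂) F s = Tw f₁ F s * (Tw f₂ F s)⁻¹ := by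
  simp only [Tw, coeffZ_sub, zpow_sub]
  rw [finprod_mul_distrib (hasFiniteMulSupport_zpow_coeffZ _ _)
    (hasFiniteMulSupport_zpow_coeffZ _ _).inv, finprod_inv_distrib]

lemma Tw_eq_mul_Tw_add_one {F G : ℂ → ℂˣ} (hFG : ∀ t, F t = G t * F (t + 1)) (f : ℤ[T;T⁻¹])
    (s : ℂ) : Tw f F s = Tw f G s * Tw f F (s + 1) := by
  simp only [Tw]
  rw [← finprod_mul_distrib (hasFiniteMulSupport_zpow_coeffZ _ _)
    (hasFiniteMulSupport_zpow_coeffZ _ _)]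
  refine finprod_congr fun k => ?_
  rw [← mul_zpow, add_sub_right_comm, ← hFG]

lemma Tw_one_sub_T_neg_one_mul {F G : ℂ → ℂˣ} (hFG : ∀ t, F t = G t * F (t + 1))
    (f : ℤ[T;T⁻¹]) (s : ℂ) : Tw ((1 - T (-1)) * f) F s = Tw f G s := by
  rw [sub_mul, one_mul, Tw_sub, Tw_T_mul, Int.cast_neg, Int.cast_one, sub_neg_eq_add,
    Tw_eq_mul_Tw_add_one hFG, mul_inv_cancel_right]

lemma Tw_const (f : ℤ[T;T⁻¹]) (c : ℂˣ) (s : ℂ) : Tw f (fun _ => c) s = c ^ evalOne f :=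
  finprod_zpow_eq_zpow_finsum c f.coeff.hasFiniteSupport

theorem Tw_one_sub_T_neg_one_pow_mul_of_ladder (F : ℕ → ℂ → ℂˣ)
    (hF1 : ∀ s : ℂ, F 1 (s + 1) = -F 1 s) {r : ℕ} (hr : 1 ≤ r)
    (hlad : ∀ j : ℕ, 2 ≤ j → j ≤ r → ∀ s : ℂ, F j s = F (j - 1) s * F j (s + 1))
    (g : ℤ[T;T⁻¹]) (s : ℂ) : Tw ((1 - T (-1)) ^ r * g) (F r) s = (-1 : ℂˣ) ^ evalOne g := by
  induction r, hr using Nat.le_induction generalizing g s with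
  | base =>
    have hF1' : ∀ t, F 1 t = -1 * F 1 (t + 1) := fun t => by simp [hF1]
    rw [pow_one, Tw_one_sub_T_neg_one_mul hF1', Tw_const]
  | succ r hr ih =>
    have hFr : ∀ t, F (r + 1) t = F r t * F (r + 1) (t + 1) := by
      simpa using hlad (r + 1) (by omega) le_rfl
    rw [pow_succ', mul_assoc, Tw_one_sub_T_neg_one_mul hFr]
    exact ih (fun j hj₂ hj => hlad j hj₂ (by omega)) _ _

/-- Let `r ≥ 1` and let `F₁, …, F_r : ℂ → ℂˣ` satisfy `F_j(s) = F_{j−1}(s)·F_j(s+1)` for all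
`s ∈ ℂ` and `2 ≤ j ≤ r`, and `F₁(s+1) = −F₁(s)` for all `s ∈ ℂ`. Let `g ∈ ℤ[x,x⁻¹]` and set
`f(x) = (1 − x⁻¹)^r · g(x)`. Then for all `s ∈ ℂ`, `(T_f F_r)(s) = (−1)^{g(1)}`, where
`g(1) ∈ ℤ` is the sum of the coefficients of `g`. In particular `(T_f F_r)(s) ∈ {1, −1}`
is constant. -/
theorem stmt5 (r : ℕ) (hr : 1 ≤ r) (F : ℕ → ℂ → ℂˣ)
    (hlad : ∀ j : ℕ, 2 ≤ j → j ≤ r → ∀ s : ℂ, F j s = F (j - 1) s * F j (s + 1))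
    (hF1 : ∀ s : ℂ, F 1 (s + 1) = -F 1 s)
    (g : ℤ[T;T⁻¹]) (f : ℤ[T;T⁻¹]) (hf : f = (1 - T (-1)) ^ r * g) (s : ℂ) :
    Tw f (F r) s = (-1 : ℂˣ) ^ evalOne g :=
  hf ▸ Tw_one_sub_T_neg_one_pow_mul_of_ladder F hF1 hr hlad g s
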